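/- Let γ be a path in [n]×[k] with γ(i) = (a_i, b_i), and let 0 < r ≤ k. Let ε_r be the least index with b_{ε_r} = r, and let u_r be the least index with a_{u_r} = a_{ε_r} (so 0 ≤ u_r < ε_r). Let α : [ℓ] → [n+k] and β : [m] → [k] be injective monotone maps such that: (1) ε_r is not in the image of α; (2) 0 is in the image of α; (3) n+k is in the image of α unless ε_r = n+k; (4) some index j with u_r ≤ j < ε_r lies in the image of α; (5) 0 and r lie in the image of β; (6) β(x) ≤ r for all x. Then there exist p ≥ 0, a path τ in [ℓ]×[m], a surjective monotone map s : [ℓ+m] → [ℓ+p], and an injective monotone map α̂ : [ℓ+p] → [n+k] whose image contains both ε_r and the image of α, such that for all (i,j) ∈ [ℓ+m]×[m] one has E_γ((α × β)(E_τ(i,j))) = E_γ(α̂(s(i)), β(j)). -/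

import Mathlib

/-- `γ` is a path in `[n] × [k]` (a simplex of maximal dimension of `Δⁿ × Δᵏ`):
it starts at `(0,0)`, ends at `(n,k)`, and each step increases exactly one
coordinate by exactly `1`.  The parameter `m` records the length of the path;
necessarily `m = n + k`. -/
def IsPath (n k m : ℕ) (γ : Fin (m + 1) → Fin (n + 1) × Fin (k + 1)) : Prop :=
  γ 0 = (0, 0) ∧
  γ (Fin.last m) = (Fin.last n, Fin.last k) ∧
  ∀ i : Fin m,
    (((γ i.succ).1 : ℕ) = ((γ i.castSucc).1 : ℕ) + 1 ∧ (γ i.succ).2 = (γ i.castSucc).2) ∨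
    ((γ i.succ).1 = (γ i.castSucc).1 ∧ ((γ i.succ).2 : ℕ) = ((γ i.castSucc).2 : ℕ) + 1)

/-- The extension `E_γ : [n+k] × [k] → [n] × [k]` of a path `γ`, given by
`E_γ(i, j) = (a_i, max (b_i) j)` where `γ i = (a_i, b_i)`. -/
def pathExt (n k m : ℕ) (γ : Fin (m + 1) → Fin (n + 1) × Fin (k + 1)) :
    Fin (m + 1) × Fin (k + 1) → Fin (n + 1) × Fin (k + 1) :=
  fun p => ((γ p.1).1, max (γ p.1).2 p.2)

/-- The strict order on paths: `γ₁ < γ₂` if at the least index `s` where they differ the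
first coordinate of `γ₁ s` is smaller than that of `γ₂ s`. -/
def pathLT (n k m : ℕ) (γ₁ γ₂ : Fin (m + 1) → Fin (n + 1) × Fin (k + 1)) : Prop :=
  ∃ s : Fin (m + 1), γ₁ s ≠ γ₂ s ∧ (∀ t : Fin (m + 1), t < s → γ₁ t = γ₂ t) ∧
    (γ₁ s).1 < (γ₂ s).1

/-!
Let `c` be the last index with `α c < ε_r`. Then `γ (α c)` lies on the vertical run of `γ` from
`u_r` to `ε_r`, at some height `b < r`, while every `α x` with `x > c` lies beyond `ε_r`, hence at
height at least `r`. Take for `τ` the path that runs along the bottom to column `c`, climbs all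
`m` rows there, and runs along the top. During the climb the rows `d` with `β d ≤ b` leave
`E_γ` at `γ (α c)`, so `s` collapses them onto `c`; the remaining rows `d` reach the points
`(a_{ε_r}, β d)` of the vertical run, which `α̂` inserts into `α` right after `c`. Since `β` attains
`r`, the last inserted point is `ε_r`.
-/

namespace IsPath

variable {n k m : ℕ} {γ : Fin (m + 1) → Fin (n + 1) × Fin (k + 1)}

theorem fst_add_snd (hγ : IsPath n k m γ) (t : Fin (m + 1)) :
    ((γ t).1 : ℕ) + (γ t).2 = t := by
  induction t using Fin.induction with
  | zero => simp [hγ.1]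
  | succ i ih =>
    rcases hγ.2.2 i with ⟨h₁, h₂⟩ | ⟨h₁, h₂⟩
    · rw [Fin.val_succ, h₁, h₂]
      simp only [Fin.val_castSucc] at ih
      omega
    · rw [Fin.val_succ, h₁, h₂]
      simp only [Fin.val_castSucc] at ih
      omega

theorem monotone_fst (hγ : IsPath n k m γ) : Monotone fun t => (γ t).1 :=
  Fin.monotone_iff_le_succ.2 fun i => by
    rcases hγ.2.2 i with ⟨h₁, -⟩ | ⟨h₁, -⟩
    · exact Fin.le_def.2 (by omega)
    · exact h₁.ge

theorem monotone_snd (hγ : IsPath n k m γ) : Monotone fun t => (γ t).2 :=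
  Fin.monotone_iff_le_succ.2 fun i => by
    rcases hγ.2.2 i with ⟨-, h₂⟩ | ⟨-, h₂⟩
    · exact h₂.ge
    · exact Fin.le_def.2 (by omega)

theorem fst_eq_of_le_of_le (hγ : IsPath n k m γ) {t₁ t t₂ : Fin (m + 1)}
    (h : (γ t₁).1 = (γ t₂).1) (h₁ : t₁ ≤ t) (h₂ : t ≤ t₂) : (γ t).1 = (γ t₂).1 :=
  le_antisymm (hγ.monotone_fst h₂) (h ▸ hγ.monotone_fst h₁)

theorem apply_eq_of_fst_eq (hγ : IsPath n k m γ) {t₁ t₂ : Fin (m + 1)}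
    (h : (γ t₁).1 = (γ t₂).1) {v : Fin (k + 1)} (h₁ : (γ t₁).2 ≤ v) (h₂ : v ≤ (γ t₂).2)
    {t : Fin (m + 1)} (ht : (t : ℕ) = (γ t₁).1 + v) : γ t = ((γ t₁).1, v) := by
  have e₁ := hγ.fst_add_snd t₁
  have e₂ := hγ.fst_add_snd t₂
  have e := hγ.fst_add_snd t
  have h' : ((γ t₁).1 : ℕ) = (γ t₂).1 := congrArg Fin.val h
  have hv₁ := Fin.le_def.1 h₁
  have hv₂ := Fin.le_def.1 h₂
  have hcol : (γ t).1 = (γ t₁).1 :=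
    (hγ.fst_eq_of_le_of_le h (Fin.le_def.2 (by omega)) (Fin.le_def.2 (by omega))).trans h.symm
  have hcol' : ((γ t).1 : ℕ) = (γ t₁).1 := congrArg Fin.val hcol
  exact Prod.ext hcol (Fin.ext (by simp only; omega))

theorem injective (hγ : IsPath n k m γ) : Function.Injective γ := fun t t' h =>
  Fin.ext (by rw [← hγ.fst_add_snd t, ← hγ.fst_add_snd t', h])

theorem exists_strictMono_apply_eq (hγ : IsPath n k m γ) {t₀ t₁ : Fin (m + 1)}
    (h : (γ t₀).1 = (γ t₁).1) {p : ℕ} {v : Fin p → Fin (k + 1)} (hv : StrictMono v)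
    (hv₀ : ∀ j, (γ t₀).2 < v j) (hv₁ : ∀ j, v j ≤ (γ t₁).2) :
    ∃ g : Fin p → Fin (m + 1),
      StrictMono g ∧ (∀ j, t₀ < g j ∧ g j ≤ t₁) ∧ ∀ j, γ (g j) = ((γ t₀).1, v j) := by
  have e₀ := hγ.fst_add_snd t₀
  have e₁ := hγ.fst_add_snd t₁
  have hle : ∀ j, ((γ t₀).1 : ℕ) + v j ≤ t₁ := fun j => by
    have := Fin.le_def.1 (hv₁ j)
    rw [h]
    omega
  refine ⟨fun j => ⟨(γ t₀).1 + v j, by have := hle j; omega⟩,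
    fun j j' hj => Nat.add_lt_add_left (hv hj) _, fun j => ⟨?_, Fin.le_def.2 (hle j)⟩,
    fun j => hγ.apply_eq_of_fst_eq h (hv₀ j).le (hv₁ j) rfl⟩
  have := Fin.lt_def.1 (hv₀ j)
  exact Fin.lt_def.2 (by simp only; omega)

end IsPath

/-- Right along the bottom to column `c`, up all `m` rows, then right along the top. -/
def hookPath (l m : ℕ) (c : Fin (l + 1)) : Fin (l + m + 1) → Fin (l + 1) × Fin (m + 1) :=
  fun i => (⟨min (i : ℕ) c + (i - (c + m)), by omega⟩, ⟨min ((i : ℕ) - c) m, by omega⟩)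

theorem isPath_hookPath (l m : ℕ) (c : Fin (l + 1)) : IsPath l m (l + m) (hookPath l m c) := by
  refine ⟨?_, ?_, fun i => ?_⟩
  · ext <;> simp [hookPath]
  · ext <;> simp only [hookPath, Fin.val_last] <;> omega
  · simp only [hookPath, Fin.ext_iff, Fin.val_succ, Fin.val_castSucc]
    omega

/-- Collapses `[c, c + q]` onto `c` and shifts everything above it down by `q`. -/
def collapseSegment (l m q : ℕ) (c : Fin (l + 1)) : Fin (l + m + 1) → Fin (l + (m - q) + 1) :=
  fun i => ⟨min (i : ℕ) (max c (i - q)), by omega⟩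

theorem monotone_collapseSegment (l m q : ℕ) (c : Fin (l + 1)) :
    Monotone (collapseSegment l m q c) := fun i j h => by
  simp only [collapseSegment, Fin.le_def] at h ⊢
  omega

theorem surjective_collapseSegment {l m q : ℕ} (hq : q ≤ m) (c : Fin (l + 1)) :
    Function.Surjective (collapseSegment l m q c) := fun y => by
  by_cases hy : (y : ℕ) ≤ c
  · exact ⟨⟨y, by omega⟩, Fin.ext (by simp only [collapseSegment]; omega)⟩
  · exact ⟨⟨y + q, by omega⟩, Fin.ext (by simp only [collapseSegment]; omega)⟩

section insertBlock

variable {X : Type*} {l p : ℕ} (f : Fin (l + 1) → X) (c : Fin (l + 1)) (g : Fin p → X)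

def insertBlock : Fin (l + p + 1) → X := fun x =>
  if hc : (x : ℕ) ≤ c then f ⟨x, by omega⟩
  else if hp : (x : ℕ) ≤ c + p then g ⟨(x : ℕ) - c - 1, by omega⟩
  else f ⟨(x : ℕ) - p, by omega⟩

variable {f c g}

theorem insertBlock_of_le {x : Fin (l + p + 1)} (hx : (x : ℕ) ≤ c) :
    insertBlock f c g x = f ⟨x, by omega⟩ :=
  dif_pos hx

theorem insertBlock_of_lt_of_le {x : Fin (l + p + 1)} (h₁ : (c : ℕ) < x) (h₂ : (x : ℕ) ≤ c + p) :
    insertBlock f c g x = g ⟨(x : ℕ) - c - 1, by omega⟩ := by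
  rw [insertBlock, dif_neg (by omega), dif_pos h₂]

theorem insertBlock_of_lt {x : Fin (l + p + 1)} (hx : (c : ℕ) + p < x) :
    insertBlock f c g x = f ⟨(x : ℕ) - p, by omega⟩ := by
  rw [insertBlock, dif_neg (by omega), dif_neg (by omega)]

theorem exists_insertBlock_eq_left (x : Fin (l + 1)) : ∃ y, insertBlock f c g y = f x := by
  by_cases hx : x ≤ c
  · exact ⟨⟨x, by omega⟩, insertBlock_of_le hx⟩
  · exact ⟨⟨x + p, by omega⟩, (insertBlock_of_lt (by simp only; omega)).trans
      (congrArg f (Fin.ext (by simp only; omega)))⟩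

theorem insertBlock_block (j : Fin p) :
    insertBlock f c g ⟨c + 1 + j, by omega⟩ = g j := by
  rw [insertBlock_of_lt_of_le (by simp only; omega) (by simp only; omega)]
  congr 1
  ext
  simp only
  omega

theorem strictMono_insertBlock [Preorder X] (hf : StrictMono f) (hg : StrictMono g)
    (hlo : ∀ j, f c < g j) (hhi : ∀ j x, c < x → g j < f x) :
    StrictMono (insertBlock f c g) := by
  intro x y (hxy : (x : ℕ) < y)
  by_cases hyc : (y : ℕ) ≤ c
  · rw [insertBlock_of_le hyc, insertBlock_of_le (by omega)]
    exact hf (Fin.mk_lt_mk.2 hxy)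
  by_cases hxp : (c : ℕ) + p < x
  · rw [insertBlock_of_lt hxp, insertBlock_of_lt (by omega)]
    exact hf (Fin.mk_lt_mk.2 (by omega))
  by_cases hyp : (y : ℕ) ≤ c + p
  · rw [insertBlock_of_lt_of_le (x := y) (by omega) hyp]
    by_cases hxc : (x : ℕ) ≤ c
    · rw [insertBlock_of_le hxc]
      exact (hf.monotone (Fin.mk_le_mk.2 hxc)).trans_lt (hlo _)
    · rw [insertBlock_of_lt_of_le (by omega) (by omega)]
      exact hg (Fin.mk_lt_mk.2 (by omega))
  · rw [insertBlock_of_lt (x := y) (by omega)]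
    by_cases hxc : (x : ℕ) ≤ c
    · rw [insertBlock_of_le hxc]
      exact hf (Fin.mk_lt_mk.2 (by omega))
    · rw [insertBlock_of_lt_of_le (by omega) (by omega)]
      exact hhi _ _ (Fin.mk_lt_mk.2 (by omega))

end insertBlock

theorem pathExt_eq_of_apply_eq {n k N m : ℕ} {γ : Fin (N + 1) → Fin (n + 1) × Fin (k + 1)}
    {β : Fin (m + 1) → Fin (k + 1)} (hβ : Monotone β) {t t' : Fin (N + 1)} {d : Fin (m + 1)}
    (h : γ t' = ((γ t).1, max (γ t).2 (β d))) (j : Fin (m + 1)) :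
    pathExt n k N γ (t, β (max d j)) = pathExt n k N γ (t', β j) := by
  simp [pathExt, h, hβ.map_max, max_assoc]

theorem apply_insertBlock_collapseSegment {n k N l m q : ℕ}
    {γ : Fin (N + 1) → Fin (n + 1) × Fin (k + 1)} {α : Fin (l + 1) → Fin (N + 1)}
    {β : Fin (m + 1) → Fin (k + 1)} {c : Fin (l + 1)} {g : Fin (m - q) → Fin (N + 1)}
    (hβ0 : β 0 = 0) (hqm : q ≤ m) (hq : ∀ d, β d ≤ (γ (α c)).2 ↔ (d : ℕ) ≤ q)
    (hg : ∀ j : Fin (m - q), γ (g j) = ((γ (α c)).1, β ⟨q + 1 + j, by omega⟩))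
    (hhigh : ∀ x, c < x → β (Fin.last m) ≤ (γ (α x)).2) (i : Fin (l + m + 1)) :
    γ (insertBlock α c g (collapseSegment l m q c i)) =
      ((γ (α (hookPath l m c i).1)).1,
        max (γ (α (hookPath l m c i).1)).2 (β (hookPath l m c i).2)) := by
  obtain ⟨i, hi⟩ := i
  by_cases hic : i ≤ c
  · have hτ : hookPath l m c ⟨i, hi⟩ = (⟨i, by omega⟩, 0) := by
      ext <;> simp only [hookPath, Fin.val_zero] <;> omega
    have hs : collapseSegment l m q c ⟨i, hi⟩ = ⟨i, by omega⟩ := by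
      ext; simp only [collapseSegment]; omega
    rw [hτ, hs, insertBlock_of_le hic, hβ0, max_eq_left (Fin.zero_le _)]
  by_cases him : i ≤ c + m
  · have hτ : hookPath l m c ⟨i, hi⟩ = (c, ⟨i - c, by omega⟩) := by
      ext <;> simp only [hookPath] <;> omega
    rw [hτ]
    by_cases hiq : i ≤ c + q
    · have hs : collapseSegment l m q c ⟨i, hi⟩ = ⟨c, by omega⟩ := by
        ext; simp only [collapseSegment]; omega
      rw [hs, insertBlock_of_le le_rfl, max_eq_left ((hq _).2 (by simp only; omega))]
    · have hs : collapseSegment l m q c ⟨i, hi⟩ = ⟨i - q, by omega⟩ := by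
        ext; simp only [collapseSegment]; omega
      have hd : (γ (α c)).2 ≤ β ⟨i - c, by omega⟩ :=
        le_of_not_ge fun h => hiq (by have := (hq _).1 h; simp only at this; omega)
      rw [hs, insertBlock_of_lt_of_le (by simp only; omega) (by simp only; omega), hg,
        max_eq_right hd]
      congr 3
      simp only
      omega
  · have hτ : hookPath l m c ⟨i, hi⟩ = (⟨i - m, by omega⟩, Fin.last m) := by
      ext <;> simp only [hookPath, Fin.val_last] <;> omega
    have hs : collapseSegment l m q c ⟨i, hi⟩ = ⟨i - q, by omega⟩ := by
      ext; simp only [collapseSegment]; omega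
    rw [hτ, hs, insertBlock_of_lt (by simp only; omega),
      max_eq_left (hhigh _ (Fin.lt_def.2 (by simp only; omega))), Prod.mk.eta]
    congr 2
    ext
    simp only
    omega

theorem exists_last_lt {ι X : Type*} [Fintype ι] [LinearOrder ι] [LinearOrder X] {f : ι → X}
    {e : X} (hne : ∀ x, f x ≠ e) {x₀ : ι} (hx₀ : f x₀ < e) :
    ∃ c, x₀ ≤ c ∧ f c < e ∧ ∀ x, c < x → e < f x := by
  obtain ⟨c, hc, hmax⟩ := (Finset.univ.filter (f · < e)).exists_max_image id ⟨x₀, by simpa⟩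
  simp only [Finset.mem_filter, Finset.mem_univ, true_and, id] at hc hmax
  exact ⟨c, hmax x₀ hx₀, hc, fun x hx =>
    (not_lt.1 fun h => (hmax x h).not_gt hx).lt_of_ne (hne x).symm⟩

theorem Monotone.exists_apply_le_iff_val_le {X : Type*} [LinearOrder X] {m : ℕ}
    {β : Fin (m + 1) → X} (hβ : Monotone β) {b : X} (h₀ : β 0 ≤ b) (hm : b < β (Fin.last m)) :
    ∃ q < m, ∀ d, β d ≤ b ↔ (d : ℕ) ≤ q := by
  have hex : ∃ d, b < β d := ⟨_, hm⟩
  set d₀ := Fin.find _ hex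
  have hd₀ : b < β d₀ := Fin.find_spec hex
  have hpos : (d₀ : ℕ) ≠ 0 := fun h => h₀.not_gt ((Fin.ext h : d₀ = 0) ▸ hd₀)
  refine ⟨d₀ - 1, by omega, fun d => ⟨fun h => ?_, fun h => ?_⟩⟩
  · by_contra hd
    exact (hd₀.trans_le (hβ (Fin.le_def.2 (by omega)))).not_ge h
  · exact not_lt.1 (Fin.find_min hex (Fin.lt_def.2 (by omega)))

theorem pathExt_no_boundaries_general (n k l m r : ℕ)
    (γ : Fin (n + k + 1) → Fin (n + 1) × Fin (k + 1)) (hγ : IsPath n k (n + k) γ)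
    (εr : Fin (n + k + 1))
    (hε : ((γ εr).2 : ℕ) = r ∧ ∀ t : Fin (n + k + 1), ((γ t).2 : ℕ) = r → εr ≤ t)
    (ur : Fin (n + k + 1))
    (hu : (γ ur).1 = (γ εr).1 ∧ ∀ t : Fin (n + k + 1), (γ t).1 = (γ εr).1 → ur ≤ t)
    (α : Fin (l + 1) → Fin (n + k + 1)) (hαm : Monotone α) (hαi : Function.Injective α)
    (β : Fin (m + 1) → Fin (k + 1)) (hβm : Monotone β) (hβi : Function.Injective β)
    (h1 : ∀ x, α x ≠ εr)
    (h4 : ∃ x, ur ≤ α x ∧ α x < εr)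
    (h5 : (∃ y, β y = 0) ∧ (∃ y, ((β y) : ℕ) = r))
    (h6 : ∀ y, ((β y) : ℕ) ≤ r) :
    ∃ (p : ℕ) (τ : Fin (l + m + 1) → Fin (l + 1) × Fin (m + 1))
      (s : Fin (l + m + 1) → Fin (l + p + 1))
      (αhat : Fin (l + p + 1) → Fin (n + k + 1)),
      IsPath l m (l + m) τ ∧
      Monotone s ∧ Function.Surjective s ∧
      Monotone αhat ∧ Function.Injective αhat ∧
      (∃ x, αhat x = εr) ∧
      (∀ x, ∃ y, αhat y = α x) ∧
      (∀ (i : Fin (l + m + 1)) (j : Fin (m + 1)),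
        pathExt n k (n + k) γ
            (α (pathExt l m (l + m) τ (i, j)).1, β (pathExt l m (l + m) τ (i, j)).2) =
          pathExt n k (n + k) γ (αhat (s i), β j)) := by
  obtain ⟨x₀, hx₀u, hx₀ε⟩ := h4
  obtain ⟨⟨y₀, hy₀⟩, y₁, hy₁⟩ := h5
  obtain ⟨c, hx₀c, hcε, hc⟩ := exists_last_lt h1 hx₀ε
  have hcol : (γ (α c)).1 = (γ εr).1 := hγ.fst_eq_of_le_of_le hu.1 (hx₀u.trans (hαm hx₀c)) hcε.le
  have hb : (γ (α c)).2 < (γ εr).2 :=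
    (hγ.monotone_snd hcε.le).lt_of_ne fun h =>
      (hε.2 _ (by rw [← hε.1]; exact congrArg Fin.val h)).not_gt hcε
  have hβ0 : β 0 = 0 := le_antisymm (hy₀ ▸ hβm (Fin.zero_le _)) (Fin.zero_le _)
  have hβlast : β (Fin.last m) = (γ εr).2 :=
    Fin.ext <| le_antisymm (hε.1 ▸ h6 _) (by rw [hε.1, ← hy₁]; exact hβm (Fin.le_last _))
  obtain ⟨q, hqm, hq⟩ := hβm.exists_apply_le_iff_val_le (hβ0 ▸ Fin.zero_le _) (hβlast ▸ hb)
  obtain ⟨g, hg_mono, hg_mem, hg⟩ := hγ.exists_strictMono_apply_eq hcol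
    (v := fun j : Fin (m - q) => β ⟨q + 1 + j, by omega⟩)
    (fun j j' h => hβm.strictMono_of_injective hβi (Fin.mk_lt_mk.2 (Nat.add_lt_add_left h _)))
    (fun j => not_le.1 fun h => by have := (hq _).1 h; simp only at this; omega)
    (fun j => (hβm (Fin.le_last _)).trans_eq hβlast)
  have hhigh : ∀ x, c < x → β (Fin.last m) ≤ (γ (α x)).2 := fun x hx =>
    hβlast ▸ hγ.monotone_snd (hc x hx).le
  have hins : StrictMono (insertBlock α c g) :=
    strictMono_insertBlock (hαm.strictMono_of_injective hαi) hg_mono (fun j => (hg_mem j).1)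
      fun j x hx => (hg_mem j).2.trans_lt (hc x hx)
  have hgε : g ⟨m - q - 1, by omega⟩ = εr := hγ.injective <| (hg _).trans <|
    Prod.ext hcol ((congrArg β (Fin.ext (by simp only [Fin.val_last]; omega))).trans hβlast)
  refine ⟨m - q, hookPath l m c, collapseSegment l m q c, insertBlock α c g, isPath_hookPath l m c,
    monotone_collapseSegment l m q c, surjective_collapseSegment hqm.le c, hins.monotone,
    hins.injective, ⟨_, (insertBlock_block _).trans hgε⟩, exists_insertBlock_eq_left,
    fun i j => pathExt_eq_of_apply_eq hβm
      (apply_insertBlock_collapseSegment hβ0 hqm.le hq hg hhigh i) j⟩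

/-- Let `γ` be a path in `[n] × [k]`, `0 < r ≤ k`, `ε_r` the least index with `b_{ε_r} = r`,
and `u_r` the least index with `a_{u_r} = a_{ε_r}`.  Given injective monotone maps
`α : [ℓ] → [n+k]` and `β : [m] → [k]` satisfying the stated conditions, there exist `p ≥ 0`,
a path `τ` in `[ℓ] × [m]`, a surjective monotone map `s : [ℓ+m] → [ℓ+p]`, and an injective
monotone map `α̂ : [ℓ+p] → [n+k]` whose image contains `ε_r` and the image of `α`, such that
`E_γ ((α × β) (E_τ (i, j))) = E_γ (α̂ (s i), β j)` for all `(i, j)`. -/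
theorem pathExt_no_boundaries (n k l m r : ℕ) (hr : 0 < r) (hrk : r ≤ k)
    (γ : Fin (n + k + 1) → Fin (n + 1) × Fin (k + 1)) (hγ : IsPath n k (n + k) γ)
    (εr : Fin (n + k + 1))
    (hε : ((γ εr).2 : ℕ) = r ∧ ∀ t : Fin (n + k + 1), ((γ t).2 : ℕ) = r → εr ≤ t)
    (ur : Fin (n + k + 1))
    (hu : (γ ur).1 = (γ εr).1 ∧ ∀ t : Fin (n + k + 1), (γ t).1 = (γ εr).1 → ur ≤ t)
    (α : Fin (l + 1) → Fin (n + k + 1)) (hαm : Monotone α) (hαi : Function.Injective α)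
    (β : Fin (m + 1) → Fin (k + 1)) (hβm : Monotone β) (hβi : Function.Injective β)
    (h1 : ∀ x, α x ≠ εr)
    (h2 : ∃ x, α x = 0)
    (h3 : εr ≠ Fin.last (n + k) → ∃ x, α x = Fin.last (n + k))
    (h4 : ∃ x, ur ≤ α x ∧ α x < εr)
    (h5 : (∃ y, β y = 0) ∧ (∃ y, ((β y) : ℕ) = r))
    (h6 : ∀ y, ((β y) : ℕ) ≤ r) :
    ∃ (p : ℕ) (τ : Fin (l + m + 1) → Fin (l + 1) × Fin (m + 1))
      (s : Fin (l + m + 1) → Fin (l + p + 1))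
      (αhat : Fin (l + p + 1) → Fin (n + k + 1)),
      IsPath l m (l + m) τ ∧
      Monotone s ∧ Function.Surjective s ∧
      Monotone αhat ∧ Function.Injective αhat ∧
      (∃ x, αhat x = εr) ∧
      (∀ x, ∃ y, αhat y = α x) ∧
      (∀ (i : Fin (l + m + 1)) (j : Fin (m + 1)),
        pathExt n k (n + k) γ
            (α (pathExt l m (l + m) τ (i, j)).1, β (pathExt l m (l + m) τ (i, j)).2) =
          pathExt n k (n + k) γ (αhat (s i), β j)) :=
  pathExt_no_boundaries_general n k l m r γ hγ εr hε ur hu α hαm hαi β hβm hβi h1 h4 h5 h6
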